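/- Let 𝒞 be a collection of cells over a field K and let W ⊆ V(𝒞) be an admissible set of 𝒞. Then P_W(𝒞) = (x_w : w ∈ W) + L_{𝒞_W} is a prime ideal of S_𝒞 containing the adjacent 2-minor ideal I_adj(𝒞). -/

import Mathlib

open MvPolynomial

/-- The vertex set of the cell with lower-left corner `a`. -/
def cellVerts (a : ℤ × ℤ) : Finset (ℤ × ℤ) :=
  {a, a + (1, 0), a + (0, 1), a + (1, 1)}

/-- The edges of the cell with lower-left corner `a`, recorded as ordered pairs
of their two endpoints: `{a,c}`, `{c,b}`, `{b,d}`, `{a,d}` where `b = a+(1,1)`,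
`c = a+(0,1)`, `d = a+(1,0)`. -/
def cellEdges (a : ℤ × ℤ) : Finset ((ℤ × ℤ) × (ℤ × ℤ)) :=
  {(a, a + (0, 1)), (a + (0, 1), a + (1, 1)), (a + (1, 1), a + (1, 0)), (a, a + (1, 0))}

/-- The vertex set of a collection of cells; cells are recorded by their
lower-left corners. -/
def verts (C : Finset (ℤ × ℤ)) : Finset (ℤ × ℤ) :=
  C.biUnion cellVerts

lemma mem_verts {C : Finset (ℤ × ℤ)} {a v : ℤ × ℤ} (ha : a ∈ C)
    (hv : v ∈ cellVerts a) : v ∈ verts C :=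
  Finset.mem_biUnion.mpr ⟨a, ha, hv⟩

lemma corner_mem00 (a : ℤ × ℤ) : a ∈ cellVerts a := by simp [cellVerts]
lemma corner_mem10 (a : ℤ × ℤ) : a + (1, 0) ∈ cellVerts a := by simp [cellVerts]
lemma corner_mem01 (a : ℤ × ℤ) : a + (0, 1) ∈ cellVerts a := by simp [cellVerts]
lemma corner_mem11 (a : ℤ × ℤ) : a + (1, 1) ∈ cellVerts a := by simp [cellVerts]

/-- The adjacent 2-minor ideal `I_adj(𝒞)` of a collection of cells, inside the
polynomial ring `S_𝒞 = K[x_v : v ∈ V(𝒞)]`. -/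
noncomputable def adjIdeal (K : Type*) [Field K] (C : Finset (ℤ × ℤ)) :
    Ideal (MvPolynomial {v // v ∈ verts C} K) :=
  Ideal.span {f | ∃ a, ∃ ha : a ∈ C,
    f = X ⟨a, mem_verts ha (corner_mem00 a)⟩ *
          X ⟨a + (1, 1), mem_verts ha (corner_mem11 a)⟩ -
        X ⟨a + (0, 1), mem_verts ha (corner_mem01 a)⟩ *
          X ⟨a + (1, 0), mem_verts ha (corner_mem10 a)⟩}

/-- The vector `v_C = e_a + e_b - e_c - e_d ∈ ℤ^{V(𝒞)}` attached to the cell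
with lower-left corner `a` (so `b = a+(1,1)`, `c = a+(0,1)`, `d = a+(1,0)`). -/
def cellVec (C : Finset (ℤ × ℤ)) (a : ℤ × ℤ) : {v // v ∈ verts C} → ℤ :=
  fun w => ((if w.1 = a then 1 else 0) + (if w.1 = a + (1, 1) then 1 else 0)
    - (if w.1 = a + (0, 1) then 1 else 0)) - (if w.1 = a + (1, 0) then 1 else 0)

/-- The lattice `Λ_𝒟 ⊆ ℤ^{V(𝒞)}` generated by the vectors `v_C`, `C ∈ 𝒟`,
for a subcollection `𝒟` of `𝒞`. -/
def cellLattice (C : Finset (ℤ × ℤ)) (D : Set (ℤ × ℤ)) :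
    AddSubgroup ({v // v ∈ verts C} → ℤ) :=
  AddSubgroup.closure {g | ∃ a ∈ D, g = cellVec C a}

/-- The lattice ideal `L_𝒟 ⊆ S_𝒞` of a subcollection `𝒟` of `𝒞`. -/
noncomputable def latticeIdeal (K : Type*) [Field K] (C : Finset (ℤ × ℤ))
    (D : Set (ℤ × ℤ)) : Ideal (MvPolynomial {v // v ∈ verts C} K) :=
  Ideal.span {f | ∃ e ∈ cellLattice C D,
    f = (∏ w, X w ^ (e w).toNat) - ∏ w, X w ^ (-(e w)).toNat}

/-- `W ⊆ V(𝒞)` is admissible: for each cell `C ∈ 𝒞`, either `W ∩ C = ∅` or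
`W ∩ C` contains an edge of `C`. -/
def Admissible (C : Finset (ℤ × ℤ)) (W : Set (ℤ × ℤ)) : Prop :=
  W ⊆ ↑(verts C) ∧ ∀ a ∈ C, (∀ v ∈ cellVerts a, v ∉ W) ∨
    ∃ e ∈ cellEdges a, e.1 ∈ W ∧ e.2 ∈ W

/-- The subcollection `𝒞_W` of cells of `𝒞` disjoint from `W`. -/
def subcollW (C : Finset (ℤ × ℤ)) (W : Set (ℤ × ℤ)) : Set (ℤ × ℤ) :=
  {a | a ∈ C ∧ ∀ v ∈ cellVerts a, v ∉ W}

/-- The ideal `P_W(𝒞) = (x_w : w ∈ W) + L_{𝒞_W}`. -/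
noncomputable def PW (K : Type*) [Field K] (C : Finset (ℤ × ℤ))
    (W : Set (ℤ × ℤ)) : Ideal (MvPolynomial {v // v ∈ verts C} K) :=
  Ideal.span {f | ∃ v : {v // v ∈ verts C}, v.1 ∈ W ∧ f = X v} +
    latticeIdeal K C (subcollW C W)

/-- The height of an ideal: the infimum of `Order.height 𝔭` over the prime
ideals `𝔭` containing it (equivalently, over its minimal primes); for a prime
ideal this is just its height. -/
noncomputable def idealHeight {R : Type*} [CommRing R] (I : Ideal R) : ℕ∞ :=
  ⨅ p ∈ {p : PrimeSpectrum R | I ≤ p.asIdeal}, Order.height p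

/-- A collection of cells is weakly connected if any two of its cells are
joined by a sequence of cells of the collection in which consecutive cells
share at least one vertex. -/
def WeaklyConnected (C : Finset (ℤ × ℤ)) : Prop :=
  ∀ a ∈ C, ∀ b ∈ C, Relation.ReflTransGen
    (fun p q => p ∈ C ∧ q ∈ C ∧ ((cellVerts p ∩ cellVerts q).Nonempty)) a b

/-- `𝒞` contains a square tetromino. -/
def HasSquareTetromino (C : Finset (ℤ × ℤ)) : Prop :=
  ∃ a : ℤ × ℤ, a ∈ C ∧ a + (1, 0) ∈ C ∧ a + (0, 1) ∈ C ∧ a + (1, 1) ∈ C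

/-- `𝒞` contains an X-pentomino. -/
def HasXPentomino (C : Finset (ℤ × ℤ)) : Prop :=
  ∃ a : ℤ × ℤ, a ∈ C ∧ a + (1, 0) ∈ C ∧ a - (1, 0) ∈ C ∧
    a + (0, 1) ∈ C ∧ a - (0, 1) ∈ C

/-- Row convexity of a collection of cells. -/
def RowConvex (C : Finset (ℤ × ℤ)) : Prop :=
  ∀ a ∈ C, ∀ b ∈ C, a.2 = b.2 → ∀ r : ℤ, a.1 ≤ r → r ≤ b.1 → (r, a.2) ∈ C

/-- Column convexity of a collection of cells. -/
def ColConvex (C : Finset (ℤ × ℤ)) : Prop :=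
  ∀ a ∈ C, ∀ b ∈ C, a.1 = b.1 → ∀ s : ℤ, a.2 ≤ s → s ≤ b.2 → (a.1, s) ∈ C

/-! Write `Λ = Λ_{𝒞_W}` and `G = ℤ^{V(𝒞)} / Λ`. The generators `v_C` of `Λ` are
unitriangular: `v_C` has coefficient `1` at the upper right corner `a + (1,1)` of `C`, and any
other cell that meets this corner has larger `a.1 + a.2`. Hence `Λ` is saturated, `G` is a
finitely generated torsion-free abelian group, and the group algebra `K[G]` is a domain.

`P_W(𝒞)` is the kernel of the `K`-algebra map `S_𝒞 → K[G]` sending `x_v` to `0` for `v ∈ W`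
and to the class of `e_v` otherwise. It kills the `x_w`, and it kills the binomials of `Λ` because
`Λ` is supported away from `W`. Conversely, modulo the `x_w`, a kernel element is a
combination of binomials `x^m - x^{m'}` with `m - m' ∈ Λ`, and these lie in `L_{𝒞_W}`.

For `I_adj(𝒞) ⊆ P_W(𝒞)`: a cell disjoint from `W` gives a generator of `L_{𝒞_W}`, and a
cell containing an edge in `W` has a variable from `W` in each monomial of its minor. -/

section KillVars

variable {σ R : Type*} [CommRing R]

noncomputable def killVars (W : Set σ) : MvPolynomial σ R →ₐ[R] MvPolynomial σ R :=
  aeval (Wᶜ.indicator X)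

lemma killVars_X_of_mem {W : Set σ} {v : σ} (hv : v ∈ W) :
    killVars W (X v : MvPolynomial σ R) = 0 := by
  simp [killVars, hv]

lemma killVars_monomial_of_forall_eq_zero {W : Set σ} {m : σ →₀ ℕ} (hm : ∀ v ∈ W, m v = 0)
    (c : R) : killVars W (monomial m c) = monomial m c := by
  rw [killVars, aeval_monomial, monomial_eq, algebraMap_eq]
  congr 1
  refine Finset.prod_congr rfl fun v hv => ?_
  have hv' : v ∈ Wᶜ := fun hW => Finsupp.mem_support_iff.1 hv (hm v hW)
  simp only [Set.indicator_of_mem hv']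

lemma sub_killVars_mem_span_X (W : Set σ) (f : MvPolynomial σ R) :
    f - killVars W f ∈ Ideal.span (X '' W) := by
  rw [← Ideal.Quotient.eq, ← Ideal.Quotient.mkₐ_eq_mk R]
  refine (DFunLike.congr_fun
    (algHom_ext (f := (Ideal.Quotient.mkₐ R _).comp (killVars W))
      (g := Ideal.Quotient.mkₐ R (Ideal.span (X '' W))) fun v => ?_) f).symm
  by_cases hv : v ∈ W
  · simpa [killVars_X_of_mem hv, eq_comm (a := (0 : _ ⧸ _)), Ideal.Quotient.eq_zero_iff_mem]
      using Ideal.subset_span (Set.mem_image_of_mem X hv)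
  · simp [killVars, hv]

end KillVars

lemma mem_span_binomials_of_mapDomain_eq_zero {σ R G : Type*} [CommRing R]
    (ψ : (σ →₀ ℕ) → G) {f : MvPolynomial σ R} (hf : AddMonoidAlgebra.mapDomain ψ f = 0) :
    f ∈ Ideal.span {g | ∃ m m', ψ m = ψ m' ∧ g = monomial m 1 - monomial m' 1} := by
  set r := Function.invFun ψ
  suffices key : ∀ p : MvPolynomial σ R,
      p - AddMonoidAlgebra.mapDomain r (AddMonoidAlgebra.mapDomain ψ p) ∈
        Ideal.span {g | ∃ m m', ψ m = ψ m' ∧ g = monomial m 1 - monomial m' 1} by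
    simpa [hf, AddMonoidAlgebra.mapDomain_zero] using key f
  intro p
  induction p using MvPolynomial.induction_on' with
  | monomial m c =>
    rw [← single_eq_monomial, AddMonoidAlgebra.mapDomain_single,
      AddMonoidAlgebra.mapDomain_single, single_eq_monomial, single_eq_monomial]
    have hfactor : monomial m c - monomial (r (ψ m)) c =
        C c * (monomial m 1 - monomial (r (ψ m)) 1) := by
      simp only [mul_sub, C_mul_monomial, mul_one]
    rw [hfactor]
    exact Ideal.mul_mem_left _ _
      (Ideal.subset_span ⟨m, _, (Function.invFun_eq ⟨m, rfl⟩).symm, rfl⟩)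
  | add p q hp hq =>
    rw [AddMonoidAlgebra.mapDomain_add, AddMonoidAlgebra.mapDomain_add]
    convert add_mem hp hq using 1
    abel

lemma ker_mapDomain_comp_killVars_le {σ R G : Type*} [CommRing R] [AddCommMonoid G]
    (W : Set σ) (ψ : (σ →₀ ℕ) →+ G) :
    RingHom.ker ((AddMonoidAlgebra.mapDomainAlgHom R R ψ).comp (killVars W)) ≤
      Ideal.span (X '' W) ⊔
        Ideal.span {g | ∃ m m', ψ m = ψ m' ∧ g = monomial m 1 - monomial m' 1} := by
  intro f hf
  rw [← sub_add_cancel f (killVars W f)]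
  exact Submodule.add_mem_sup (sub_killVars_mem_span_X W f)
    (mem_span_binomials_of_mapDomain_eq_zero ψ (by simpa using hf))

theorem dvd_of_dvd_sum_of_unitriangular {α ι β R : Type*} [Fintype α] [CommRing R]
    [LinearOrder β] (v : α → ι → R) (p : α → ι) (r : α → β) (hp : ∀ a, v a (p a) = 1)
    (hr : ∀ a b, b ≠ a → v b (p a) ≠ 0 → r a < r b) {n : R} {c : α → R}
    (h : ∀ i, n ∣ ∑ a, c a * v a i) (a : α) : n ∣ c a := by
  classical
  by_contra ha
  obtain ⟨a₀, ha₀, hmax⟩ := (Finset.univ.filter fun a => ¬ n ∣ c a).exists_max_image r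
    ⟨a, by simpa using ha⟩
  rw [Finset.mem_filter] at ha₀
  have hothers : n ∣ ∑ b ∈ Finset.univ.erase a₀, c b * v b (p a₀) := by
    refine Finset.dvd_sum fun b hb => ?_
    by_cases hv : v b (p a₀) = 0
    · simp [hv]
    · refine Dvd.dvd.mul_right (not_not.1 fun hnb => ?_) _
      exact (hmax b (by simpa using hnb)).not_gt (hr a₀ b (Finset.ne_of_mem_erase hb) hv)
  have hpivot := h (p a₀)
  rw [← Finset.add_sum_erase _ _ (Finset.mem_univ a₀), hp, mul_one] at hpivot
  exact ha₀.2 ((dvd_add_left hothers).1 hpivot)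

lemma QuotientAddGroup.isAddTorsionFree_of_nsmulSaturated {G : Type*} [AddCommGroup G]
    {H : AddSubgroup G} (hH : H.NSMulSaturated) : IsAddTorsionFree (G ⧸ H) where
  nsmul_right_injective n hn x y hxy := by
    induction x using QuotientAddGroup.induction_on
    induction y using QuotientAddGroup.induction_on
    dsimp only at hxy
    rw [← QuotientAddGroup.mk_nsmul, ← QuotientAddGroup.mk_nsmul, QuotientAddGroup.eq] at hxy
    rw [QuotientAddGroup.eq]
    exact (hH (by rwa [nsmul_add, smul_neg])).resolve_left hn

section CellLattice

variable {C : Finset (ℤ × ℤ)}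

lemma cellVec_apply_of_eq_top {a : ℤ × ℤ} {w : verts C} (hw : w.1 = a + (1, 1)) :
    cellVec C a w = 1 := by
  simp only [cellVec, hw, Prod.ext_iff, Prod.fst_add, Prod.snd_add]
  split_ifs <;> omega

lemma lt_of_cellVec_apply_top_ne_zero {a b : ℤ × ℤ} {w : verts C} (hw : w.1 = a + (1, 1))
    (hab : b ≠ a) (h : cellVec C b w ≠ 0) : a.1 + a.2 < b.1 + b.2 := by
  simp only [cellVec, hw, Prod.ext_iff, Prod.fst_add, Prod.snd_add, ne_eq] at h hab
  split_ifs at h <;> omega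

lemma nsmulSaturated_cellLattice {D : Set (ℤ × ℤ)} (hD : D ⊆ C) :
    (cellLattice C D).NSMulSaturated := by
  intro n x hx
  refine or_iff_not_imp_left.2 fun hn => ?_
  have : Fintype D := (C.finite_toSet.subset hD).fintype
  have hrange : {g | ∃ a ∈ D, g = cellVec C a} = Set.range fun a : D => cellVec C a := by
    ext; simp [eq_comm]
  simp only [AddSubgroup.mem_toAddSubmonoid, cellLattice, hrange,
    AddSubgroup.mem_closure_range_iff_of_fintype] at hx ⊢
  obtain ⟨c, hc⟩ := hx
  have hdvd : ∀ a, (n : ℤ) ∣ c a := by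
    refine dvd_of_dvd_sum_of_unitriangular (fun a : D => cellVec C a)
      (fun a => ⟨a.1 + (1, 1), mem_verts (hD a.2) (corner_mem11 _)⟩)
      (fun a => a.1.1 + a.1.2)
      (fun a => cellVec_apply_of_eq_top rfl)
      (fun a b hab => lt_of_cellVec_apply_top_ne_zero rfl (Subtype.coe_ne_coe.2 hab))
      fun w => ⟨x w, ?_⟩
    simpa [Finset.sum_apply] using (congrFun hc w).symm
  refine ⟨fun a => c a / n, nsmul_right_injective hn ?_⟩
  dsimp only
  rw [hc, Finset.smul_sum]
  refine Finset.sum_congr rfl fun a _ => ?_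
  rw [← natCast_zsmul, smul_smul, Int.mul_ediv_cancel' (hdvd a)]

end CellLattice

section Exponents

variable {σ : Type*}

variable (σ) in
noncomputable def expToInt : (σ →₀ ℕ) →+ (σ → ℤ) :=
  AddMonoidHom.pi fun v => (Nat.castAddMonoidHom ℤ).comp (Finsupp.applyAddHom v)

@[simp] lemma expToInt_apply (m : σ →₀ ℕ) (v : σ) : expToInt σ m v = m v := rfl

noncomputable def toNatFinsupp [Finite σ] (e : σ → ℤ) : σ →₀ ℕ :=
  Finsupp.equivFunOnFinite.symm fun v => (e v).toNat

@[simp] lemma toNatFinsupp_apply [Finite σ] (e : σ → ℤ) (v : σ) :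
    toNatFinsupp e v = (e v).toNat := rfl

lemma expToInt_toNatFinsupp_sub [Finite σ] (e : σ → ℤ) :
    expToInt σ (toNatFinsupp e) - expToInt σ (toNatFinsupp (-e)) = e := by
  funext v
  simp only [Pi.sub_apply, expToInt_apply, toNatFinsupp_apply, Pi.neg_apply]
  omega

lemma prod_X_pow_toNat [Fintype σ] {R : Type*} [CommSemiring R] (e : σ → ℤ) :
    ∏ v, (X v : MvPolynomial σ R) ^ (e v).toNat = monomial (toNatFinsupp e) 1 := by
  rw [monomial_eq, C_1, one_mul, Finsupp.prod_fintype _ _ fun _ => pow_zero _]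
  rfl

end Exponents

section LatticeIdeal

variable (K : Type*) [Field K] {C : Finset (ℤ × ℤ)} {D : Set (ℤ × ℤ)}

lemma monomial_toNatFinsupp_sub_mem_latticeIdeal {e : verts C → ℤ}
    (he : e ∈ cellLattice C D) :
    monomial (toNatFinsupp e) (1 : K) - monomial (toNatFinsupp (-e)) 1 ∈ latticeIdeal K C D :=
  Ideal.subset_span ⟨e, he, by rw [← prod_X_pow_toNat, ← prod_X_pow_toNat]; rfl⟩

lemma monomial_sub_monomial_mem_latticeIdeal {m m' : verts C →₀ ℕ}
    (h : expToInt _ m - expToInt _ m' ∈ cellLattice C D) :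
    monomial m (1 : K) - monomial m' 1 ∈ latticeIdeal K C D := by
  set e := expToInt _ m - expToInt _ m'
  have hm : m ⊓ m' + toNatFinsupp e = m := by
    ext v; simp only [e, Finsupp.add_apply, Finsupp.inf_apply, toNatFinsupp_apply,
      Pi.sub_apply, expToInt_apply]; omega
  have hm' : m ⊓ m' + toNatFinsupp (-e) = m' := by
    ext v; simp only [e, Finsupp.add_apply, Finsupp.inf_apply, toNatFinsupp_apply,
      Pi.neg_apply, Pi.sub_apply, expToInt_apply]; omega
  have hfactor : monomial m (1 : K) - monomial m' 1 =
      monomial (m ⊓ m') 1 * (monomial (toNatFinsupp e) 1 - monomial (toNatFinsupp (-e)) 1) := by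
    rw [mul_sub, monomial_mul, monomial_mul, mul_one, hm, hm']
  rw [hfactor]
  exact Ideal.mul_mem_left _ _ (monomial_toNatFinsupp_sub_mem_latticeIdeal K h)

end LatticeIdeal

section ToricMap

variable (K : Type*) [Field K] (C : Finset (ℤ × ℤ)) (W : Set (ℤ × ℤ))

noncomputable def cellWeight (D : Set (ℤ × ℤ)) :
    (verts C →₀ ℕ) →+ (verts C → ℤ) ⧸ cellLattice C D :=
  (QuotientAddGroup.mk' _).comp (expToInt _)

noncomputable def toricMap :
    MvPolynomial (verts C) K →ₐ[K]
      AddMonoidAlgebra K ((verts C → ℤ) ⧸ cellLattice C (subcollW C W)) :=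
  (AddMonoidAlgebra.mapDomainAlgHom K K (cellWeight C (subcollW C W))).comp
    (killVars (Subtype.val ⁻¹' W))

variable {K C W}

lemma cellWeight_eq_iff {D : Set (ℤ × ℤ)} {m m' : verts C →₀ ℕ} :
    cellWeight C D m = cellWeight C D m' ↔ expToInt _ m - expToInt _ m' ∈ cellLattice C D :=
  QuotientAddGroup.eq_iff_sub_mem

lemma apply_eq_zero_of_mem_cellLattice_subcollW {e : verts C → ℤ}
    (he : e ∈ cellLattice C (subcollW C W)) {v : verts C} (hv : v.1 ∈ W) : e v = 0 := by
  induction he using AddSubgroup.closure_induction with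
  | mem g hg =>
    obtain ⟨a, ⟨-, ha⟩, rfl⟩ := hg
    have hne : ∀ u ∈ cellVerts a, v.1 ≠ u := fun u hu h => ha u hu (h ▸ hv)
    simp [cellVec, hne _ (corner_mem00 a), hne _ (corner_mem01 a), hne _ (corner_mem10 a),
      hne _ (corner_mem11 a)]
  | zero => rfl
  | add _ _ _ _ h₁ h₂ => simp [h₁, h₂]
  | neg _ _ h => simp [h]

lemma PW_eq_span_X_sup_latticeIdeal :
    PW K C W = Ideal.span (X '' (Subtype.val ⁻¹' W)) ⊔ latticeIdeal K C (subcollW C W) := by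
  rw [PW, Submodule.add_eq_sup]
  congr
  ext f
  simp [eq_comm]

lemma latticeIdeal_le_ker_toricMap :
    latticeIdeal K C (subcollW C W) ≤ RingHom.ker (toricMap K C W) := by
  refine Ideal.span_le.2 ?_
  rintro f ⟨e, he, rfl⟩
  have hfree : ∀ v ∈ Subtype.val ⁻¹' W, e v = 0 :=
    fun v hv => apply_eq_zero_of_mem_cellLattice_subcollW he hv
  have hweight : cellWeight C (subcollW C W) (toNatFinsupp e) =
      cellWeight C (subcollW C W) (toNatFinsupp (-e)) := by
    rw [cellWeight_eq_iff, expToInt_toNatFinsupp_sub]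
    exact he
  have hneg : ∏ w, (X w : MvPolynomial (verts C) K) ^ (-e w).toNat =
      monomial (toNatFinsupp (-e)) 1 := prod_X_pow_toNat (-e)
  rw [SetLike.mem_coe, RingHom.mem_ker, prod_X_pow_toNat, hneg, map_sub, toricMap,
    AlgHom.comp_apply, AlgHom.comp_apply,
    killVars_monomial_of_forall_eq_zero fun v hv => by simp [hfree v hv],
    killVars_monomial_of_forall_eq_zero fun v hv => by simp [hfree v hv],
    AddMonoidAlgebra.mapDomainAlgHom_apply, AddMonoidAlgebra.mapDomainAlgHom_apply,
    ← single_eq_monomial, ← single_eq_monomial, AddMonoidAlgebra.mapDomain_single,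
    AddMonoidAlgebra.mapDomain_single, hweight, sub_self]

lemma PW_le_ker_toricMap : PW K C W ≤ RingHom.ker (toricMap K C W) := by
  rw [PW_eq_span_X_sup_latticeIdeal]
  refine sup_le (Ideal.span_le.2 ?_) latticeIdeal_le_ker_toricMap
  rintro f ⟨v, hv, rfl⟩
  simp [toricMap, killVars_X_of_mem (R := K) hv]

lemma ker_toricMap_le_PW : RingHom.ker (toricMap K C W) ≤ PW K C W := by
  refine (ker_mapDomain_comp_killVars_le _ _).trans ?_
  rw [PW_eq_span_X_sup_latticeIdeal]
  refine sup_le_sup_left (Ideal.span_le.2 ?_) _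
  rintro f ⟨m, m', hmm', rfl⟩
  exact monomial_sub_monomial_mem_latticeIdeal K (cellWeight_eq_iff.1 hmm')

theorem PW_eq_ker_toricMap : PW K C W = RingHom.ker (toricMap K C W) :=
  le_antisymm PW_le_ker_toricMap ker_toricMap_le_PW

theorem PW_isPrime : (PW K C W).IsPrime := by
  have : IsAddTorsionFree ((verts C → ℤ) ⧸ cellLattice C (subcollW C W)) :=
    QuotientAddGroup.isAddTorsionFree_of_nsmulSaturated
      (nsmulSaturated_cellLattice fun _ ha => ha.1)
  rw [PW_eq_ker_toricMap]
  exact RingHom.ker_isPrime _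

end ToricMap

section AdjacentMinors

variable (K : Type*) [Field K] {C : Finset (ℤ × ℤ)}

lemma adjMinor_mem_latticeIdeal {D : Set (ℤ × ℤ)} {a : ℤ × ℤ} (ha : a ∈ C) (haD : a ∈ D) :
    (X ⟨a, mem_verts ha (corner_mem00 a)⟩ : MvPolynomial (verts C) K) *
        X ⟨a + (1, 1), mem_verts ha (corner_mem11 a)⟩ -
      X ⟨a + (0, 1), mem_verts ha (corner_mem01 a)⟩ *
        X ⟨a + (1, 0), mem_verts ha (corner_mem10 a)⟩ ∈ latticeIdeal K C D := by
  have hexp : expToInt _ (Finsupp.single ⟨a, mem_verts ha (corner_mem00 a)⟩ 1 +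
        Finsupp.single ⟨a + (1, 1), mem_verts ha (corner_mem11 a)⟩ 1) -
      expToInt _ (Finsupp.single ⟨a + (0, 1), mem_verts ha (corner_mem01 a)⟩ 1 +
        Finsupp.single ⟨a + (1, 0), mem_verts ha (corner_mem10 a)⟩ 1) = cellVec C a := by
    funext w
    simp only [Pi.sub_apply, expToInt_apply, Finsupp.add_apply, Finsupp.single_apply, cellVec,
      Subtype.ext_iff, Prod.ext_iff, Prod.fst_add, Prod.snd_add]
    split_ifs <;> omega
  simp only [X, monomial_mul, mul_one]
  exact monomial_sub_monomial_mem_latticeIdeal K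
    (by rw [hexp]; exact AddSubgroup.subset_closure ⟨a, haD, rfl⟩)

theorem adjIdeal_le_PW {W : Set (ℤ × ℤ)} (hW : Admissible C W) :
    adjIdeal K C ≤ PW K C W := by
  refine Ideal.span_le.2 ?_
  rintro f ⟨a, ha, rfl⟩
  rw [SetLike.mem_coe, PW_eq_span_X_sup_latticeIdeal]
  rcases hW.2 a ha with hdisj | ⟨e, he, he₁, he₂⟩
  · exact Ideal.mem_sup_right (adjMinor_mem_latticeIdeal K ha ⟨ha, hdisj⟩)
  refine Ideal.mem_sup_left ?_
  have hX : ∀ v : verts C, v.1 ∈ W →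
      (X v : MvPolynomial (verts C) K) ∈ Ideal.span (X '' (Subtype.val ⁻¹' W)) :=
    fun v hv => Ideal.subset_span ⟨v, hv, rfl⟩
  -- every edge of a cell has one endpoint on the diagonal and one on the anti-diagonal
  simp only [cellEdges, Finset.mem_insert, Finset.mem_singleton] at he
  rcases he with rfl | rfl | rfl | rfl
  · exact sub_mem (Ideal.mul_mem_right _ _ (hX _ he₁)) (Ideal.mul_mem_right _ _ (hX _ he₂))
  · exact sub_mem (Ideal.mul_mem_left _ _ (hX _ he₂)) (Ideal.mul_mem_right _ _ (hX _ he₁))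
  · exact sub_mem (Ideal.mul_mem_left _ _ (hX _ he₁)) (Ideal.mul_mem_left _ _ (hX _ he₂))
  · exact sub_mem (Ideal.mul_mem_right _ _ (hX _ he₁)) (Ideal.mul_mem_left _ _ (hX _ he₂))

end AdjacentMinors

theorem stmt_4_general (K : Type*) [Field K] (C : Finset (ℤ × ℤ))
    (W : Set (ℤ × ℤ)) (hW : Admissible C W) :
    (PW K C W).IsPrime ∧ adjIdeal K C ≤ PW K C W :=
  ⟨PW_isPrime, adjIdeal_le_PW K hW⟩

/-- For an admissible set `W` of `𝒞`, the ideal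
`P_W(𝒞) = (x_w : w ∈ W) + L_{𝒞_W}` is a prime ideal containing `I_adj(𝒞)`. -/
theorem stmt_4 (K : Type*) [Field K] (C : Finset (ℤ × ℤ)) (hC : C.Nonempty)
    (W : Set (ℤ × ℤ)) (hW : Admissible C W) :
    (PW K C W).IsPrime ∧ adjIdeal K C ≤ PW K C W :=
  stmt_4_general K C W hW
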